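/- Point 2 (second part) of the main lemma: under the contraction condition, for each t ∈ {2,…,n} the martingale difference satisfies |d_t| ≤ K_{n−t}(ρ) H_{t,ε}(X_{t−1}, ε_t) almost surely, where H_{t,ε}(x, y) = ∫ d(F_t(x, y), F_t(x, y')) P_ε(dy'). -/

import Mathlib

open MeasureTheory ProbabilityTheory Finset

/-- `K_t(ρ) = (1 - ρ^(t+1))/(1 - ρ)`. -/
noncomputable def Kgeom (ρ : ℝ) (t : ℕ) : ℝ := (1 - ρ ^ (t + 1)) / (1 - ρ)

/-- Backward recursion defining the conditional expectation functionals: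
`gAux Pε F n f k = g_{n-k}`, i.e. `gAux _ _ _ _ 0 = g_n = f` and
`g_{t-1}(x) = ∫ g_t(x_1,…,x_{t-1}, F_t(x_{t-1}, y)) Pε(dy)`.
For the Markov chain `X_t = F_t(X_{t-1}, ε_t)`, `gAux Pε F n f (n - t)` applied to
`(X_1,…,X_t,…)` is a version of `E[f(X_1,…,X_n) | X_1,…,X_t]`; in particular, for `2 ≤ t`
the martingale difference `d_t = g_t(X_1,…,X_t) - g_{t-1}(X_1,…,X_{t-1})` equals
`gAux Pε F n f (n - t) (X·) - gAux Pε F n f (n - (t-1)) (X·)`. -/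
noncomputable def gAux {𝓧 𝓨 : Type*} [MeasurableSpace 𝓨] (Pε : Measure 𝓨)
    (F : ℕ → 𝓧 → 𝓨 → 𝓧) (n : ℕ) (f : (ℕ → 𝓧) → ℝ) : ℕ → (ℕ → 𝓧) → ℝ
  | 0 => f
  | (k + 1) => fun x =>
      ∫ y, gAux Pε F n f k (Function.update x (n - k) (F (n - k) (x (n - k - 1)) y)) ∂Pε

/-!
Write `g_k = gAux Pε F n f k` and `j = n - k`. By induction on `k`, `g_k` is `1`-Lipschitz in
the coordinates `1, …, j - 1` and `K_k(ρ)`-Lipschitz in coordinate `j`: integrating out `y` in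
`F_j(x_{j-1}, y)` turns the constant `K` in coordinate `j` into `1 + ρ K` in coordinate `j - 1`,
by the contraction condition. Then `d_t` is `g_k(x)` minus the average of `g_k` over resamplings
of `x_t`, hence at most `K_k(ρ)` times the mean distance from `x_t = F_t(x_{t-1}, ε_t)` to its
resamples `F_t(x_{t-1}, y')`.
-/

open Function

lemma Kgeom_zero {ρ : ℝ} (hρ1 : ρ < 1) : Kgeom ρ 0 = 1 := by
  rw [Kgeom, zero_add, pow_one, div_self (sub_ne_zero.2 hρ1.ne')]

lemma Kgeom_succ {ρ : ℝ} (hρ1 : ρ < 1) (k : ℕ) : Kgeom ρ (k + 1) = 1 + ρ * Kgeom ρ k := by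
  have : (1 : ℝ) - ρ ≠ 0 := sub_ne_zero.2 hρ1.ne'
  rw [Kgeom, Kgeom]
  field_simp
  ring

lemma Kgeom_nonneg {ρ : ℝ} (hρ0 : 0 ≤ ρ) (hρ1 : ρ < 1) (k : ℕ) : 0 ≤ Kgeom ρ k :=
  div_nonneg (sub_nonneg.2 (pow_le_one₀ hρ0 hρ1.le)) (sub_nonneg.2 hρ1.le)

section Resampling

variable {𝓧 𝓨 : Type*} [MetricSpace 𝓧] [MeasurableSpace 𝓨] {Pε : Measure 𝓨}
  {g : (ℕ → 𝓧) → ℝ} {j : ℕ} {K : ℝ}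

lemma abs_sub_update_le
    (hg : ∀ x x', |g x - g x'| ≤ ∑ s ∈ Ico 1 j, dist (x s) (x' s) + K * dist (x j) (x' j))
    (x : ℕ → 𝓧) (b : 𝓧) : |g x - g (update x j b)| ≤ K * dist (x j) b := by
  have hsum : ∑ s ∈ Ico 1 j, dist (x s) (update x j b s) = 0 :=
    sum_eq_zero fun s hs => by rw [update_of_ne (mem_Ico.1 hs).2.ne, dist_self]
  simpa [hsum] using hg x (update x j b)

lemma integrable_comp_update [MeasurableSpace 𝓧] [IsFiniteMeasure Pε] (hg_meas : Measurable g)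
    (hg : ∀ x b, |g x - g (update x j b)| ≤ K * dist (x j) b) {G : 𝓨 → 𝓧} (hG : Measurable G)
    (hH : ∀ y₀, Integrable (fun y => dist (G y) (G y₀)) Pε) (z : ℕ → 𝓧) :
    Integrable (fun y => g (update z j (G y))) Pε := by
  rcases isEmpty_or_nonempty 𝓨 with h𝓨 | ⟨⟨y₀⟩⟩
  · exact .of_isEmpty
  refine Integrable.mono' ((integrable_const |g (update z j (G y₀))|).add ((hH y₀).const_mul K))
    (hg_meas.comp ((measurable_update z).comp hG)).aestronglyMeasurable (ae_of_all _ fun y => ?_)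
  have h := hg (update z j (G y)) (G y₀)
  rw [update_idem, update_self] at h
  simp only [Real.norm_eq_abs, Pi.add_apply]
  linarith [abs_sub_abs_le_abs_sub (g (update z j (G y))) (g (update z j (G y₀)))]

lemma abs_sub_integral_update_le [IsProbabilityMeasure Pε]
    (hg : ∀ x b, |g x - g (update x j b)| ≤ K * dist (x j) b) {G : 𝓨 → 𝓧} {x : ℕ → 𝓧}
    (hgG : Integrable (fun y => g (update x j (G y))) Pε)
    (hH : Integrable (fun y => dist (x j) (G y)) Pε) :
    |g x - ∫ y, g (update x j (G y)) ∂Pε| ≤ K * ∫ y, dist (x j) (G y) ∂Pε := by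
  rw [← integral_const_mul]
  calc |g x - ∫ y, g (update x j (G y)) ∂Pε|
      = ‖∫ y, (g x - g (update x j (G y))) ∂Pε‖ := by
        rw [integral_sub (integrable_const _) hgG, integral_const, probReal_univ, one_smul,
          Real.norm_eq_abs]
    _ ≤ ∫ y, K * dist (x j) (G y) ∂Pε :=
        norm_integral_le_of_norm_le (hH.const_mul K) (ae_of_all _ fun y => hg x (G y))

lemma abs_integral_update_sub_integral_update_le [IsProbabilityMeasure Pε]
    {F : 𝓧 → 𝓨 → 𝓧} {ρ : ℝ} (hK : 0 ≤ K)
    (hcontract : ∀ x x', ∫ y, dist (F x y) (F x' y) ∂Pε ≤ ρ * dist x x')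
    (hintc : ∀ x x', Integrable (fun y => dist (F x y) (F x' y)) Pε)
    (hg : ∀ x x', |g x - g x'| ≤
      ∑ s ∈ Ico 1 (j + 1), dist (x s) (x' s) + K * dist (x (j + 1)) (x' (j + 1)))
    (hgF : ∀ z d, Integrable (fun y => g (update z (j + 1) (F d y))) Pε) (x x' : ℕ → 𝓧) :
    |∫ y, g (update x (j + 1) (F (x j) y)) ∂Pε - ∫ y, g (update x' (j + 1) (F (x' j) y)) ∂Pε| ≤
      ∑ s ∈ Ico 1 j, dist (x s) (x' s) + (1 + ρ * K) * dist (x j) (x' j) := by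
  set S := ∑ s ∈ Ico 1 (j + 1), dist (x s) (x' s)
  have hpointwise : ∀ y, ‖g (update x (j + 1) (F (x j) y)) - g (update x' (j + 1) (F (x' j) y))‖
      ≤ S + K * dist (F (x j) y) (F (x' j) y) := by
    intro y
    have h := hg (update x (j + 1) (F (x j) y)) (update x' (j + 1) (F (x' j) y))
    have hS : ∑ s ∈ Ico 1 (j + 1), dist (update x (j + 1) (F (x j) y) s)
        (update x' (j + 1) (F (x' j) y) s) = S :=
      sum_congr rfl fun s hs => by
        rw [update_of_ne (mem_Ico.1 hs).2.ne, update_of_ne (mem_Ico.1 hs).2.ne]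
    rwa [hS, update_self, update_self] at h
  have hS : S ≤ ∑ s ∈ Ico 1 j, dist (x s) (x' s) + dist (x j) (x' j) := by
    rcases Nat.eq_zero_or_pos j with rfl | hj
    · simp [S]
    · exact (sum_Ico_succ_top hj _).le
  calc _ = ‖∫ y, (g (update x (j + 1) (F (x j) y)) - g (update x' (j + 1) (F (x' j) y))) ∂Pε‖ := by
        rw [integral_sub (hgF x (x j)) (hgF x' (x' j)), Real.norm_eq_abs]
    _ ≤ ∫ y, (S + K * dist (F (x j) y) (F (x' j) y)) ∂Pε :=
        norm_integral_le_of_norm_le ((integrable_const S).add ((hintc _ _).const_mul K))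
          (ae_of_all _ hpointwise)
    _ = S + K * ∫ y, dist (F (x j) y) (F (x' j) y) ∂Pε := by
        rw [integral_add (integrable_const S) ((hintc _ _).const_mul K), integral_const,
          integral_const_mul, probReal_univ, one_smul]
    _ ≤ S + K * (ρ * dist (x j) (x' j)) := by gcongr; exact hcontract _ _
    _ ≤ _ := by linarith

end Resampling

section ConditionalExpectations

variable {𝓧 𝓨 : Type*} [MeasurableSpace 𝓧] [MeasurableSpace 𝓨] {Pε : Measure 𝓨}
  {F : ℕ → 𝓧 → 𝓨 → 𝓧} {n : ℕ} {f : (ℕ → 𝓧) → ℝ}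

lemma measurable_gAux [SFinite Pε] (hmF : ∀ t, Measurable (uncurry (F t))) (hmf : Measurable f)
    (k : ℕ) : Measurable (gAux Pε F n f k) := by
  induction k with
  | zero => exact hmf
  | succ k ih =>
    have hresample : Measurable fun p : (ℕ → 𝓧) × 𝓨 =>
        update p.1 (n - k) (F (n - k) (p.1 (n - k - 1)) p.2) :=
      measurable_update'.comp (measurable_fst.prodMk (show Measurable
        (uncurry (F (n - k)) ∘ fun p : (ℕ → 𝓧) × 𝓨 => (p.1 (n - k - 1), p.2)) from
        (hmF (n - k)).comp (((measurable_pi_apply _).comp measurable_fst).prodMk measurable_snd)))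
    exact ((ih.comp hresample).stronglyMeasurable.integral_prod_right').measurable

variable [MetricSpace 𝓧] [IsProbabilityMeasure Pε] {ρ : ℝ}

theorem abs_gAux_sub_le (hρ0 : 0 ≤ ρ) (hρ1 : ρ < 1) (hmF : ∀ t, Measurable (uncurry (F t)))
    (hcontract : ∀ t x x', ∫ y, dist (F t x y) (F t x' y) ∂Pε ≤ ρ * dist x x')
    (hintc : ∀ t x x', Integrable (fun y => dist (F t x y) (F t x' y)) Pε)
    (hintH : ∀ t x y₀, Integrable (fun y => dist (F t x y) (F t x y₀)) Pε)
    (hmf : Measurable f) (hlip : ∀ x x', |f x - f x'| ≤ ∑ t ∈ Icc 1 n, dist (x t) (x' t))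
    {k : ℕ} (hk : k < n) (x x' : ℕ → 𝓧) :
    |gAux Pε F n f k x - gAux Pε F n f k x'| ≤
      ∑ s ∈ Ico 1 (n - k), dist (x s) (x' s) + Kgeom ρ k * dist (x (n - k)) (x' (n - k)) := by
  induction k generalizing x x' with
  | zero =>
    rw [Kgeom_zero hρ1, one_mul, Nat.sub_zero, ← sum_Ico_succ_top (by omega),
      Ico_add_one_right_eq_Icc]
    exact hlip x x'
  | succ k ih =>
    obtain ⟨j, hj⟩ : ∃ j, n - k = j + 1 := ⟨n - k - 1, by omega⟩
    have hj' : n - (k + 1) = j := by omega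
    simp only [gAux]
    rw [hj, Nat.add_sub_cancel, hj', Kgeom_succ hρ1]
    have hg := ih (by omega)
    rw [hj] at hg
    exact abs_integral_update_sub_integral_update_le (Kgeom_nonneg hρ0 hρ1 k)
      (hcontract (j + 1)) (hintc (j + 1)) hg
      (fun z d => integrable_comp_update (measurable_gAux hmF hmf k) (abs_sub_update_le hg)
        ((hmF (j + 1)).comp measurable_prodMk_left) (hintH (j + 1) d) z) x x'

end ConditionalExpectations

theorem martingale_difference_bound_general
    {Ω : Type*} [MeasurableSpace Ω] (μ : Measure Ω)
    {𝓧 : Type*} [MetricSpace 𝓧] [MeasurableSpace 𝓧]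
    {𝓨 : Type*} [MeasurableSpace 𝓨]
    (X : ℕ → Ω → 𝓧) (ε : ℕ → Ω → 𝓨) (Pε : Measure 𝓨) [IsProbabilityMeasure Pε]
    (F : ℕ → 𝓧 → 𝓨 → 𝓧) (hmF : ∀ t, Measurable (Function.uncurry (F t)))
    (hchain : ∀ t, 2 ≤ t → ∀ ω, X t ω = F t (X (t - 1) ω) (ε t ω))
    (ρ : ℝ) (hρ0 : 0 ≤ ρ) (hρ1 : ρ < 1)
    (hcontract : ∀ t x x', ∫ y, dist (F t x y) (F t x' y) ∂Pε ≤ ρ * dist x x')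
    (hintc : ∀ t x x', Integrable (fun y => dist (F t x y) (F t x' y)) Pε)
    (hintH : ∀ t x y₀, Integrable (fun y => dist (F t x y) (F t x y₀)) Pε)
    (n : ℕ) (f : (ℕ → 𝓧) → ℝ) (hmf : Measurable f)
    (hlip : ∀ x x', |f x - f x'| ≤ ∑ t ∈ Icc 1 n, dist (x t) (x' t)) :
    ∀ t, 2 ≤ t → t ≤ n → ∀ᵐ ω ∂μ,
      |gAux Pε F n f (n - t) (fun i => X i ω) -
          gAux Pε F n f (n - (t - 1)) (fun i => X i ω)| ≤
        Kgeom ρ (n - t) *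
          ∫ y', dist (F t (X (t - 1) ω) (ε t ω)) (F t (X (t - 1) ω) y') ∂Pε := by
  intro t ht2 htn
  refine ae_of_all μ fun ω => ?_
  have hlipschitz := abs_gAux_sub_le hρ0 hρ1 hmF hcontract hintc hintH hmf hlip (k := n - t)
    (by omega)
  have ht : n - (n - t) = t := by omega
  rw [ht] at hlipschitz
  have hresample := abs_sub_update_le hlipschitz
  rw [show n - (t - 1) = n - t + 1 by omega]
  simp only [gAux]
  rw [ht, ← hchain t ht2 ω]
  refine abs_sub_integral_update_le hresample
    (integrable_comp_update (measurable_gAux hmF hmf _) hresample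
      ((hmF t).comp measurable_prodMk_left) (hintH t _) _) ?_
  rw [hchain t ht2 ω]
  simpa only [dist_comm] using hintH t (X (t - 1) ω) (ε t ω)

/-- Point 2 (second part) of the main lemma: for `t ∈ {2,…,n}`, almost surely
`|d_t| ≤ K_{n-t}(ρ) H_{t,ε}(X_{t-1}, ε_t)` where
`H_{t,ε}(x,y) = ∫ d(F_t(x,y), F_t(x,y')) P_ε(dy')`. -/
theorem martingale_difference_bound
    {Ω : Type*} [MeasurableSpace Ω] (μ : Measure Ω) [IsProbabilityMeasure μ]
    {𝓧 : Type*} [MetricSpace 𝓧] [CompleteSpace 𝓧] [TopologicalSpace.SeparableSpace 𝓧]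
    [MeasurableSpace 𝓧] [BorelSpace 𝓧]
    {𝓨 : Type*} [MetricSpace 𝓨] [CompleteSpace 𝓨] [TopologicalSpace.SeparableSpace 𝓨]
    [MeasurableSpace 𝓨] [BorelSpace 𝓨]
    (X : ℕ → Ω → 𝓧) (ε : ℕ → Ω → 𝓨) (Pε : Measure 𝓨) [IsProbabilityMeasure Pε]
    (hmX1 : Measurable (X 1)) (hmε : ∀ t, Measurable (ε t))
    (hlaw : ∀ t, 2 ≤ t → μ.map (ε t) = Pε)
    (hiid : iIndepFun
      (fun t : {t : ℕ // 2 ≤ t} => ε t.1) μ)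
    (hindep : IndepFun (X 1) (fun ω => fun t : {t : ℕ // 2 ≤ t} => ε t.1 ω) μ)
    (F : ℕ → 𝓧 → 𝓨 → 𝓧) (hmF : ∀ t, Measurable (Function.uncurry (F t)))
    (hchain : ∀ t, 2 ≤ t → ∀ ω, X t ω = F t (X (t - 1) ω) (ε t ω))
    (ρ : ℝ) (hρ0 : 0 ≤ ρ) (hρ1 : ρ < 1)
    (hcontract : ∀ t x x', ∫ y, dist (F t x y) (F t x' y) ∂Pε ≤ ρ * dist x x')
    (hintc : ∀ t x x', Integrable (fun y => dist (F t x y) (F t x' y)) Pε)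
    (hintH : ∀ t x y₀, Integrable (fun y => dist (F t x y) (F t x y₀)) Pε)
    (n : ℕ) (hn : 1 ≤ n)
    (f : (ℕ → 𝓧) → ℝ) (hmf : Measurable f)
    (hlip : ∀ x x', |f x - f x'| ≤ ∑ t ∈ Icc 1 n, dist (x t) (x' t)) :
    ∀ t, 2 ≤ t → t ≤ n → ∀ᵐ ω ∂μ,
      |gAux Pε F n f (n - t) (fun i => X i ω) -
          gAux Pε F n f (n - (t - 1)) (fun i => X i ω)| ≤
        Kgeom ρ (n - t) *
          ∫ y', dist (F t (X (t - 1) ω) (ε t ω)) (F t (X (t - 1) ω) y') ∂Pε :=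
  martingale_difference_bound_general μ X ε Pε F hmF hchain ρ hρ0 hρ1 hcontract hintc hintH n f hmf
    hlip
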